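/- Cut elimination: every sequent Γ ⊃ Δ derivable in the sequent calculus G with cut is derivable in the cut-free sequent calculus Gcf (where the axiom rule is restricted to atomic formulas). -/

import Mathlib

inductive PropF (V : Type) : Type
  | Var : V → PropF V
  | Bot : PropF V
  | Conj : PropF V → PropF V → PropF V
  | Disj : PropF V → PropF V → PropF V
  | Impl : PropF V → PropF V → PropF V
deriving DecidableEq

variable {V : Type} [DecidableEq V]

def PropF.Neg (A : PropF V) : PropF V := A.Impl .Bot
def PropF.Top : PropF V := PropF.Neg .Bot

def TrueQ (v : V → Bool) : PropF V → Bool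
  | .Var p => v p
  | .Bot => false
  | .Conj B C => TrueQ v B && TrueQ v C
  | .Disj B C => TrueQ v B || TrueQ v C
  | .Impl B C => !(TrueQ v B) || TrueQ v C

def Satisfies (v : V → Bool) (Γ : List (PropF V)) : Prop := ∀ A ∈ Γ, TrueQ v A = true
def Models (Γ : List (PropF V)) (A : PropF V) : Prop := ∀ v, Satisfies v Γ → TrueQ v A = true
def Valid (A : PropF V) : Prop := Models [] A
def Validates (v : V → Bool) (Δ : List (PropF V)) : Prop := ∃ A ∈ Δ, TrueQ v A = true

inductive Nc : List (PropF V) → PropF V → Prop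
  | Nax (Γ : List (PropF V)) (A : PropF V) : A ∈ Γ → Nc Γ A
  | ImpI (Γ : List (PropF V)) (A B : PropF V) : Nc (A :: Γ) B → Nc Γ (A.Impl B)
  | ImpE (Γ : List (PropF V)) (A B : PropF V) : Nc Γ (A.Impl B) → Nc Γ A → Nc Γ B
  | BotC (Γ : List (PropF V)) (A : PropF V) : Nc (A.Neg :: Γ) .Bot → Nc Γ A
  | AndI (Γ : List (PropF V)) (A B : PropF V) : Nc Γ A → Nc Γ B → Nc Γ (A.Conj B)
  | AndE1 (Γ : List (PropF V)) (A B : PropF V) : Nc Γ (A.Conj B) → Nc Γ A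
  | AndE2 (Γ : List (PropF V)) (A B : PropF V) : Nc Γ (A.Conj B) → Nc Γ B
  | OrI1 (Γ : List (PropF V)) (A B : PropF V) : Nc Γ A → Nc Γ (A.Disj B)
  | OrI2 (Γ : List (PropF V)) (A B : PropF V) : Nc Γ B → Nc Γ (A.Disj B)
  | OrE (Γ : List (PropF V)) (A B C : PropF V) : Nc Γ (A.Disj B) → Nc (A :: Γ) C → Nc (B :: Γ) C → Nc Γ C

def Provable (A : PropF V) : Prop := Nc [] A

inductive NNF (V : Type) : Type
  | NPos : V → NNF V
  | NNeg : V → NNF V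
  | NBot : NNF V
  | NTop : NNF V
  | NConj : NNF V → NNF V → NNF V
  | NDisj : NNF V → NNF V → NNF V
deriving DecidableEq

def NNFtoPropF : NNF V → PropF V
  | .NPos p => .Var p
  | .NNeg p => (PropF.Var p).Neg
  | .NBot => .Bot
  | .NTop => PropF.Top
  | .NConj B C => (NNFtoPropF B).Conj (NNFtoPropF C)
  | .NDisj B C => (NNFtoPropF B).Disj (NNFtoPropF C)

mutual
def MakeNNF : PropF V → NNF V
  | .Var p => .NPos p
  | .Bot => .NBot
  | .Disj B C => .NDisj (MakeNNF B) (MakeNNF C)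
  | .Conj B C => .NConj (MakeNNF B) (MakeNNF C)
  | .Impl B C => .NDisj (MakeNNFN B) (MakeNNF C)
def MakeNNFN : PropF V → NNF V
  | .Var p => .NNeg p
  | .Bot => .NTop
  | .Disj B C => .NConj (MakeNNFN B) (MakeNNFN C)
  | .Conj B C => .NDisj (MakeNNFN B) (MakeNNFN C)
  | .Impl B C => .NConj (MakeNNF B) (MakeNNFN C)
end

inductive Lit (V : Type) : Type
  | LPos : V → Lit V
  | LNeg : V → Lit V
  | LBot : Lit V
  | LTop : Lit V
deriving DecidableEq

def LiteraltoPropF : Lit V → PropF V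
  | .LPos p => .Var p
  | .LNeg p => (PropF.Var p).Neg
  | .LBot => .Bot
  | .LTop => PropF.Top

abbrev Clause (V : Type) : Type := List (Lit V)
abbrev CNF (V : Type) : Type := List (Clause V)

abbrev ClausetoPropF (l : Clause V) : PropF V :=
  l.foldr (fun a r => (LiteraltoPropF a).Disj r) .Bot

def CNFtoPropF (ll : CNF V) : PropF V :=
  ll.foldr (fun c r => (ClausetoPropF c).Conj r) PropF.Top

def AddClause (l : Clause V) (ll : CNF V) : CNF V := ll.map (fun l2 => l ++ l2)
def Disjunct (ll ll2 : CNF V) : CNF V := ll.flatMap (fun l => AddClause l ll2)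

def MakeCNF : NNF V → CNF V
  | .NPos p => [[.LPos p]]
  | .NNeg p => [[.LNeg p]]
  | .NBot => [[.LBot]]
  | .NTop => [[.LTop]]
  | .NConj B C => MakeCNF B ++ MakeCNF C
  | .NDisj B C => Disjunct (MakeCNF B) (MakeCNF C)

def Valid_Clause (l : Clause V) : Prop :=
  Lit.LTop ∈ l ∨ ∃ p, Lit.LPos p ∈ l ∧ Lit.LNeg p ∈ l
def Valid_CNF (ll : CNF V) : Prop := ∀ l ∈ ll, Valid_Clause l

inductive AxiomH : PropF V → Prop
  | HOrI1 (A B : PropF V) : AxiomH (A.Impl (A.Disj B))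
  | HOrI2 (A B : PropF V) : AxiomH (B.Impl (A.Disj B))
  | HAndI (A B : PropF V) : AxiomH (A.Impl (B.Impl (A.Conj B)))
  | HOrE (A B C : PropF V) : AxiomH ((A.Disj B).Impl ((A.Impl C).Impl ((B.Impl C).Impl C)))
  | HAndE1 (A B : PropF V) : AxiomH ((A.Conj B).Impl A)
  | HAndE2 (A B : PropF V) : AxiomH ((A.Conj B).Impl B)
  | HS (A B C : PropF V) : AxiomH ((A.Impl (B.Impl C)).Impl ((A.Impl B).Impl (A.Impl C)))
  | HK (A B : PropF V) : AxiomH (A.Impl (B.Impl A))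
  | HClas (A : PropF V) : AxiomH ((A.Neg.Neg).Impl A)

inductive Hc : List (PropF V) → PropF V → Prop
  | Hass (A : PropF V) (Γ : List (PropF V)) : A ∈ Γ → Hc Γ A
  | Hax (A : PropF V) (Γ : List (PropF V)) : AxiomH A → Hc Γ A
  | HImpE (Γ : List (PropF V)) (A B : PropF V) : Hc Γ (A.Impl B) → Hc Γ A → Hc Γ B

inductive G : List (PropF V) → List (PropF V) → Prop
  | Gax (A : PropF V) (Γ Δ : List (PropF V)) : A ∈ Γ → A ∈ Δ → G Γ Δ
  | GBot (Γ Δ : List (PropF V)) : PropF.Bot ∈ Γ → G Γ Δ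
  | AndL (A B : PropF V) (Γ1 Γ2 Δ : List (PropF V)) : G (Γ1 ++ A :: B :: Γ2) Δ → G (Γ1 ++ (A.Conj B) :: Γ2) Δ
  | AndR (A B : PropF V) (Γ Δ1 Δ2 : List (PropF V)) : G Γ (Δ1 ++ A :: Δ2) → G Γ (Δ1 ++ B :: Δ2) → G Γ (Δ1 ++ (A.Conj B) :: Δ2)
  | OrL (A B : PropF V) (Γ1 Γ2 Δ : List (PropF V)) : G (Γ1 ++ A :: Γ2) Δ → G (Γ1 ++ B :: Γ2) Δ → G (Γ1 ++ (A.Disj B) :: Γ2) Δ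
  | OrR (A B : PropF V) (Γ Δ1 Δ2 : List (PropF V)) : G Γ (Δ1 ++ A :: B :: Δ2) → G Γ (Δ1 ++ (A.Disj B) :: Δ2)
  | ImpL (A B : PropF V) (Γ1 Γ2 Δ : List (PropF V)) : G (Γ1 ++ B :: Γ2) Δ → G (Γ1 ++ Γ2) (A :: Δ) → G (Γ1 ++ (A.Impl B) :: Γ2) Δ
  | ImpR (A B : PropF V) (Γ Δ1 Δ2 : List (PropF V)) : G (A :: Γ) (Δ1 ++ B :: Δ2) → G Γ (Δ1 ++ (A.Impl B) :: Δ2)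
  | Cut (A : PropF V) (Γ Δ : List (PropF V)) : G Γ (A :: Δ) → G (A :: Γ) Δ → G Γ Δ

inductive Gcf : List (PropF V) → List (PropF V) → Prop
  | Gax (p : V) (Γ Δ : List (PropF V)) : PropF.Var p ∈ Γ → PropF.Var p ∈ Δ → Gcf Γ Δ
  | GBot (Γ Δ : List (PropF V)) : PropF.Bot ∈ Γ → Gcf Γ Δ
  | AndL (A B : PropF V) (Γ1 Γ2 Δ : List (PropF V)) : Gcf (Γ1 ++ A :: B :: Γ2) Δ → Gcf (Γ1 ++ (A.Conj B) :: Γ2) Δ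
  | AndR (A B : PropF V) (Γ Δ1 Δ2 : List (PropF V)) : Gcf Γ (Δ1 ++ A :: Δ2) → Gcf Γ (Δ1 ++ B :: Δ2) → Gcf Γ (Δ1 ++ (A.Conj B) :: Δ2)
  | OrL (A B : PropF V) (Γ1 Γ2 Δ : List (PropF V)) : Gcf (Γ1 ++ A :: Γ2) Δ → Gcf (Γ1 ++ B :: Γ2) Δ → Gcf (Γ1 ++ (A.Disj B) :: Γ2) Δ
  | OrR (A B : PropF V) (Γ Δ1 Δ2 : List (PropF V)) : Gcf Γ (Δ1 ++ A :: B :: Δ2) → Gcf Γ (Δ1 ++ (A.Disj B) :: Δ2)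
  | ImpL (A B : PropF V) (Γ1 Γ2 Δ : List (PropF V)) : Gcf (Γ1 ++ B :: Γ2) Δ → Gcf (Γ1 ++ Γ2) (A :: Δ) → Gcf (Γ1 ++ (A.Impl B) :: Γ2) Δ
  | ImpR (A B : PropF V) (Γ Δ1 Δ2 : List (PropF V)) : Gcf (A :: Γ) (Δ1 ++ B :: Δ2) → Gcf Γ (Δ1 ++ (A.Impl B) :: Δ2)

def BigOr (Δ : List (PropF V)) : PropF V := Δ.foldr PropF.Disj .Bot

def size : PropF V → Nat
  | .Var _ => 0
  | .Bot => 0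
  | .Conj B C => (size B + size C).succ
  | .Disj B C => (size B + size C).succ
  | .Impl B C => (size B + size C).succ

def sizel (Γ : List (PropF V)) : Nat := (Γ.map size).sum
def sizes (Γ Δ : List (PropF V)) : Nat := sizel Γ + sizel Δ

/-!
Cut elimination is proved semantically. Every rule of `G`, cut included, is sound for the
two-valued semantics of sequents. Conversely, every logical rule is invertible: its conclusion is
valid iff its premises are, and the premises are smaller. So a valid sequent decomposes, using
`Gcf` rules only, into valid sequents of variables and `⊥`; such a sequent has `⊥` on the left or a
variable on both sides, since otherwise the valuation making exactly the variables on the left true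
refutes it.
-/

-- Rebinding `V` keeps the `[DecidableEq V]` declared above out of the lemmas below.
variable {V : Type}

def SequentValid (Γ Δ : List (PropF V)) : Prop := ∀ v, Satisfies v Γ → Validates v Δ

section Semantics

variable {v : V → Bool} {A B : PropF V} {Γ Γ1 Γ2 Δ Δ1 Δ2 : List (PropF V)}

@[simp]
lemma trueQ_conj : TrueQ v (A.Conj B) = true ↔ TrueQ v A = true ∧ TrueQ v B = true := by
  simp [TrueQ]

@[simp]
lemma trueQ_disj : TrueQ v (A.Disj B) = true ↔ TrueQ v A = true ∨ TrueQ v B = true := by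
  simp [TrueQ]

@[simp]
lemma trueQ_impl : TrueQ v (A.Impl B) = true ↔ (TrueQ v A = true → TrueQ v B = true) := by
  simp [TrueQ, imp_iff_not_or]

@[simp]
lemma satisfies_cons : Satisfies v (A :: Γ) ↔ TrueQ v A = true ∧ Satisfies v Γ := by
  simp [Satisfies]

@[simp]
lemma satisfies_append : Satisfies v (Γ1 ++ Γ2) ↔ Satisfies v Γ1 ∧ Satisfies v Γ2 := by
  simp [Satisfies, or_imp, forall_and]

@[simp]
lemma validates_cons : Validates v (A :: Δ) ↔ TrueQ v A = true ∨ Validates v Δ := by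
  simp [Validates]

@[simp]
lemma validates_append : Validates v (Δ1 ++ Δ2) ↔ Validates v Δ1 ∨ Validates v Δ2 := by
  simp [Validates, or_and_right, exists_or]

end Semantics

section Rules

variable {A B : PropF V} {Γ Γ1 Γ2 Δ Δ1 Δ2 : List (PropF V)}

lemma sequentValid_andL_iff :
    SequentValid (Γ1 ++ A.Conj B :: Γ2) Δ ↔ SequentValid (Γ1 ++ A :: B :: Γ2) Δ :=
  forall_congr' fun v => by simp [and_assoc]

lemma sequentValid_andR_iff :
    SequentValid Γ (Δ1 ++ A.Conj B :: Δ2) ↔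
      SequentValid Γ (Δ1 ++ A :: Δ2) ∧ SequentValid Γ (Δ1 ++ B :: Δ2) := by
  simp only [SequentValid, ← forall_and]
  exact forall_congr' fun v => by
    simp only [validates_append, validates_cons, trueQ_conj]; tauto

lemma sequentValid_orL_iff :
    SequentValid (Γ1 ++ A.Disj B :: Γ2) Δ ↔
      SequentValid (Γ1 ++ A :: Γ2) Δ ∧ SequentValid (Γ1 ++ B :: Γ2) Δ := by
  simp only [SequentValid, ← forall_and]
  exact forall_congr' fun v => by
    simp only [satisfies_append, satisfies_cons, trueQ_disj, and_imp]; tauto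

lemma sequentValid_orR_iff :
    SequentValid Γ (Δ1 ++ A.Disj B :: Δ2) ↔ SequentValid Γ (Δ1 ++ A :: B :: Δ2) :=
  forall_congr' fun v => by simp [or_assoc]

lemma sequentValid_impL_iff :
    SequentValid (Γ1 ++ A.Impl B :: Γ2) Δ ↔
      SequentValid (Γ1 ++ B :: Γ2) Δ ∧ SequentValid (Γ1 ++ Γ2) (A :: Δ) := by
  simp only [SequentValid, ← forall_and]
  exact forall_congr' fun v => by
    simp only [satisfies_append, satisfies_cons, trueQ_impl, and_imp, validates_cons]; tauto

lemma sequentValid_impR_iff :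
    SequentValid Γ (Δ1 ++ A.Impl B :: Δ2) ↔ SequentValid (A :: Γ) (Δ1 ++ B :: Δ2) :=
  forall_congr' fun v => by
    simp only [validates_append, validates_cons, trueQ_impl, satisfies_cons, and_imp]; tauto

theorem G.sequentValid (h : G Γ Δ) : SequentValid Γ Δ := by
  induction h with
  | Gax A Γ Δ hΓ hΔ => exact fun v hv => ⟨A, hΔ, hv A hΓ⟩
  | GBot Γ Δ hΓ => exact fun v hv => absurd (hv _ hΓ) (by simp [TrueQ])
  | AndL _ _ _ _ _ _ ih => exact sequentValid_andL_iff.mpr ih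
  | AndR _ _ _ _ _ _ _ ih₁ ih₂ => exact sequentValid_andR_iff.mpr ⟨ih₁, ih₂⟩
  | OrL _ _ _ _ _ _ _ ih₁ ih₂ => exact sequentValid_orL_iff.mpr ⟨ih₁, ih₂⟩
  | OrR _ _ _ _ _ _ ih => exact sequentValid_orR_iff.mpr ih
  | ImpL _ _ _ _ _ _ _ ih₁ ih₂ => exact sequentValid_impL_iff.mpr ⟨ih₁, ih₂⟩
  | ImpR _ _ _ _ _ _ ih => exact sequentValid_impR_iff.mpr ih
  | Cut A Γ Δ _ _ ih₁ ih₂ =>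
    intro v hv
    exact (validates_cons.mp (ih₁ v hv)).elim
      (fun hA => ih₂ v (satisfies_cons.mpr ⟨hA, hv⟩)) id

end Rules

lemma sizel_append (Γ1 Γ2 : List (PropF V)) : sizel (Γ1 ++ Γ2) = sizel Γ1 + sizel Γ2 := by
  simp [sizel]

lemma sizel_cons (A : PropF V) (Γ : List (PropF V)) : sizel (A :: Γ) = size A + sizel Γ := by
  simp [sizel]

lemma size_eq_zero_iff {A : PropF V} : size A = 0 ↔ A = .Bot ∨ ∃ p, A = .Var p := by
  cases A <;> simp [size]

section Completeness

variable {Γ Δ : List (PropF V)}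

theorem Gcf.of_sequentValid_of_size_eq_zero [DecidableEq V] (hΓ : ∀ A ∈ Γ, size A = 0)
    (hΔ : ∀ A ∈ Δ, size A = 0) (h : SequentValid Γ Δ) : Gcf Γ Δ := by
  by_cases hBot : PropF.Bot ∈ Γ
  · exact .GBot Γ Δ hBot
  by_cases hVar : ∃ p, PropF.Var p ∈ Γ ∧ PropF.Var p ∈ Δ
  · obtain ⟨p, hpΓ, hpΔ⟩ := hVar
    exact .Gax p Γ Δ hpΓ hpΔ
  exfalso
  let v : V → Bool := fun p => decide (PropF.Var p ∈ Γ)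
  have hv : Satisfies v Γ := fun A hA => by
    rcases size_eq_zero_iff.mp (hΓ A hA) with rfl | ⟨p, rfl⟩
    · exact absurd hA hBot
    · simpa [v, TrueQ] using hA
  obtain ⟨A, hA, hvA⟩ := h v hv
  rcases size_eq_zero_iff.mp (hΔ A hA) with rfl | ⟨p, rfl⟩
  · simp [TrueQ] at hvA
  · exact hVar ⟨p, by simpa [v, TrueQ] using hvA, hA⟩

section Decomposition

variable {A : PropF V}
  (ih : ∀ Γ' Δ' : List (PropF V), sizes Γ' Δ' < sizes Γ Δ → SequentValid Γ' Δ' → Gcf Γ' Δ')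
include ih

theorem Gcf.of_sequentValid_of_mem_left (hA : A ∈ Γ) (hA0 : size A ≠ 0)
    (h : SequentValid Γ Δ) : Gcf Γ Δ := by
  obtain ⟨Γ1, Γ2, rfl⟩ := List.append_of_mem hA
  cases A with
  | Var | Bot => simp [size] at hA0
  | Conj A B =>
    exact .AndL _ _ _ _ _
      (ih _ _ (by grind [sizes, sizel_append, sizel_cons, size]) (sequentValid_andL_iff.mp h))
  | Disj A B =>
    obtain ⟨hA, hB⟩ := sequentValid_orL_iff.mp h
    exact .OrL _ _ _ _ _ (ih _ _ (by grind [sizes, sizel_append, sizel_cons, size]) hA)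
      (ih _ _ (by grind [sizes, sizel_append, sizel_cons, size]) hB)
  | Impl A B =>
    obtain ⟨hB, hA⟩ := sequentValid_impL_iff.mp h
    exact .ImpL _ _ _ _ _ (ih _ _ (by grind [sizes, sizel_append, sizel_cons, size]) hB)
      (ih _ _ (by grind [sizes, sizel_append, sizel_cons, size]) hA)

theorem Gcf.of_sequentValid_of_mem_right (hA : A ∈ Δ) (hA0 : size A ≠ 0)
    (h : SequentValid Γ Δ) : Gcf Γ Δ := by
  obtain ⟨Δ1, Δ2, rfl⟩ := List.append_of_mem hA
  cases A with
  | Var | Bot => simp [size] at hA0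
  | Conj A B =>
    obtain ⟨hA, hB⟩ := sequentValid_andR_iff.mp h
    exact .AndR _ _ _ _ _ (ih _ _ (by grind [sizes, sizel_append, sizel_cons, size]) hA)
      (ih _ _ (by grind [sizes, sizel_append, sizel_cons, size]) hB)
  | Disj A B =>
    exact .OrR _ _ _ _ _
      (ih _ _ (by grind [sizes, sizel_append, sizel_cons, size]) (sequentValid_orR_iff.mp h))
  | Impl A B =>
    exact .ImpR _ _ _ _ _
      (ih _ _ (by grind [sizes, sizel_append, sizel_cons, size]) (sequentValid_impR_iff.mp h))

end Decomposition

end Completeness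

theorem Gcf.of_sequentValid [DecidableEq V] {Γ Δ : List (PropF V)} (h : SequentValid Γ Δ) :
    Gcf Γ Δ := by
  have ih (Γ' Δ' : List (PropF V)) (hlt : sizes Γ' Δ' < sizes Γ Δ) (h' : SequentValid Γ' Δ') :
      Gcf Γ' Δ' :=
    Gcf.of_sequentValid h'
  by_cases hΓ : ∃ A ∈ Γ, size A ≠ 0
  · obtain ⟨A, hA, hA0⟩ := hΓ
    exact .of_sequentValid_of_mem_left ih hA hA0 h
  by_cases hΔ : ∃ A ∈ Δ, size A ≠ 0
  · obtain ⟨A, hA, hA0⟩ := hΔ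
    exact .of_sequentValid_of_mem_right ih hA hA0 h
  push Not at hΓ hΔ
  exact .of_sequentValid_of_size_eq_zero hΓ hΔ h
termination_by sizes Γ Δ

theorem stmt18 {V : Type} [DecidableEq V] (Γ Δ : List (PropF V)) (h : G Γ Δ) :
    Gcf Γ Δ :=
  Gcf.of_sequentValid h.sequentValid
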